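/- Let S, P_A, P_B be unital complex algebras, let ω be a linear functional on S and σ_A, σ_B linear functionals on P_A, P_B, and let Θ_A, Θ_B be unital algebra automorphisms of S⊗P_A and S⊗P_B respectively. With Θ̂_A, Θ̂_B the extensions of Θ_A, Θ_B to automorphisms of S⊗P_A⊗P_B (Θ̂_A acting on the first and second tensor factors, Θ̂_B on the first and third) and ε_B(O) := (id_S⊗σ_B)(Θ_B(1⊗O)), the following identity holds for all O_A ∈ P_A and O_B ∈ P_B: (ω⊗σ_A⊗σ_B)((Θ̂_A ∘ Θ̂_B)(1⊗O_A⊗O_B)) = (ω⊗σ_A)(Θ_A(ε_B(O_B)⊗O_A)). -/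

import Mathlib

/- `Θ̂_B` sends `1 ⊗ O_A ⊗ O_B` to `Θ_B(1 ⊗ O_B)` with `O_A` slotted back into the
second factor. Since `Θ̂_A` does not touch `P_B`, evaluating `σ_B` on the third factor commutes
with `Θ̂_A`, and doing so first collapses `Θ_B(1 ⊗ O_B)` to `ε_B(O_B)`. -/

open scoped TensorProduct

noncomputable section

variable {S PA PB : Type*} [Ring S] [Algebra ℂ S]
  [Ring PA] [Algebra ℂ PA] [Ring PB] [Algebra ℂ PB]

/-- The tensor product `ω ⊗ σ` of two linear functionals, determined by
`(ω ⊗ σ)(a ⊗ b) = ω a * σ b`. -/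
def tensorFunctional {A B : Type*} [Ring A] [Algebra ℂ A]
    [Ring B] [Algebra ℂ B] (ω : A →ₗ[ℂ] ℂ) (σ : B →ₗ[ℂ] ℂ) :
    A ⊗[ℂ] B →ₗ[ℂ] ℂ :=
  (TensorProduct.lid ℂ ℂ).toLinearMap.comp (TensorProduct.map ω σ)

/-- The partial trace `id_S ⊗ σ : S ⊗ P →ₗ S`, determined by `a ⊗ b ↦ σ(b) • a`. -/
def idTensorFunctional (S : Type*) [Ring S] [Algebra ℂ S] {P : Type*}
    [Ring P] [Algebra ℂ P] (σ : P →ₗ[ℂ] ℂ) : S ⊗[ℂ] P →ₗ[ℂ] S :=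
  (TensorProduct.rid ℂ S).toLinearMap.comp (TensorProduct.map LinearMap.id σ)

/-- The rearrangement isomorphism `(S ⊗ P_A) ⊗ P_B ≃ (S ⊗ P_B) ⊗ P_A`
exchanging the two probe factors. -/
def probeSwap (S PA PB : Type*) [Ring S] [Algebra ℂ S]
    [Ring PA] [Algebra ℂ PA] [Ring PB] [Algebra ℂ PB] :
    ((S ⊗[ℂ] PA) ⊗[ℂ] PB) ≃ₐ[ℂ] ((S ⊗[ℂ] PB) ⊗[ℂ] PA) :=
  (Algebra.TensorProduct.assoc ℂ ℂ ℂ S PA PB).trans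
    ((Algebra.TensorProduct.congr AlgEquiv.refl
        (Algebra.TensorProduct.comm ℂ PA PB)).trans
      (Algebra.TensorProduct.assoc ℂ ℂ ℂ S PB PA).symm)

/-- The extension `Θ̂_A` of an automorphism `Θ_A` of `S ⊗ P_A` to
`(S ⊗ P_A) ⊗ P_B`, acting trivially on `P_B`. -/
def hatA (ΘA : (S ⊗[ℂ] PA) ≃ₐ[ℂ] (S ⊗[ℂ] PA)) :
    ((S ⊗[ℂ] PA) ⊗[ℂ] PB) ≃ₐ[ℂ] ((S ⊗[ℂ] PA) ⊗[ℂ] PB) :=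
  Algebra.TensorProduct.congr ΘA AlgEquiv.refl

/-- The extension `Θ̂_B` of an automorphism `Θ_B` of `S ⊗ P_B` to
`(S ⊗ P_A) ⊗ P_B`, acting on the first and third tensor factors and trivially
on `P_A`. -/
def hatB (ΘB : (S ⊗[ℂ] PB) ≃ₐ[ℂ] (S ⊗[ℂ] PB)) :
    ((S ⊗[ℂ] PA) ⊗[ℂ] PB) ≃ₐ[ℂ] ((S ⊗[ℂ] PA) ⊗[ℂ] PB) :=
  (probeSwap S PA PB).trans ((Algebra.TensorProduct.congr ΘB AlgEquiv.refl).trans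
    (probeSwap S PA PB).symm)

/-- The induced system observable `ε(O) = (id_S ⊗ σ)(Θ (1 ⊗ O))` of a probe
observable `O`. -/
def inducedObservable {P : Type*} [Ring P] [Algebra ℂ P] (σ : P →ₗ[ℂ] ℂ)
    (Θ : (S ⊗[ℂ] P) ≃ₐ[ℂ] (S ⊗[ℂ] P)) (O : P) : S :=
  idTensorFunctional S σ (Θ ((1 : S) ⊗ₜ[ℂ] O))

@[simp]
theorem tensorFunctional_tmul {A B : Type*} [Ring A] [Algebra ℂ A] [Ring B] [Algebra ℂ B]
    (ω : A →ₗ[ℂ] ℂ) (σ : B →ₗ[ℂ] ℂ) (a : A) (b : B) :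
    tensorFunctional ω σ (a ⊗ₜ b) = ω a * σ b := by
  simp [tensorFunctional]

@[simp]
theorem idTensorFunctional_tmul {P : Type*} [Ring P] [Algebra ℂ P]
    (σ : P →ₗ[ℂ] ℂ) (s : S) (b : P) :
    idTensorFunctional S σ (s ⊗ₜ b) = σ b • s := by
  simp [idTensorFunctional]

@[simp]
theorem probeSwap_symm_tmul (s : S) (b : PB) (a : PA) :
    (probeSwap S PA PB).symm ((s ⊗ₜ b) ⊗ₜ a) = (s ⊗ₜ a) ⊗ₜ b := by
  simp [probeSwap]

theorem hatB_tmul (ΘB : (S ⊗[ℂ] PB) ≃ₐ[ℂ] (S ⊗[ℂ] PB)) (s : S) (a : PA) (b : PB) :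
    hatB ΘB ((s ⊗ₜ a) ⊗ₜ b) = (probeSwap S PA PB).symm (ΘB (s ⊗ₜ b) ⊗ₜ a) := by
  simp [hatB, probeSwap]

theorem tensorFunctional_hatA (φ : S ⊗[ℂ] PA →ₗ[ℂ] ℂ) (σ : PB →ₗ[ℂ] ℂ)
    (ΘA : (S ⊗[ℂ] PA) ≃ₐ[ℂ] (S ⊗[ℂ] PA)) (y : (S ⊗[ℂ] PA) ⊗[ℂ] PB) :
    tensorFunctional φ σ (hatA ΘA y) = tensorFunctional (φ ∘ₗ ΘA.toLinearMap) σ y := by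
  induction y using TensorProduct.induction_on with
  | zero => simp
  | tmul x b => simp [hatA]
  | add y z hy hz => simp only [map_add, hy, hz]

theorem tensorFunctional_probeSwap_symm_tmul (ψ : S ⊗[ℂ] PA →ₗ[ℂ] ℂ) (σ : PB →ₗ[ℂ] ℂ)
    (x : S ⊗[ℂ] PB) (a : PA) :
    tensorFunctional ψ σ ((probeSwap S PA PB).symm (x ⊗ₜ a))
      = ψ (idTensorFunctional S σ x ⊗ₜ a) := by
  induction x using TensorProduct.induction_on with
  | zero => simp
  | tmul s b => simp [← TensorProduct.smul_tmul', mul_comm]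
  | add x y hx hy => simp only [TensorProduct.add_tmul, map_add, hx, hy]

/-- Equation (20) of the paper: for probes `A` and `B` of a system `S`,
`(ω ⊗ σ_A ⊗ σ_B)((Θ̂_A ∘ Θ̂_B)(1 ⊗ O_A ⊗ O_B)) = (ω ⊗ σ_A)(Θ_A (ε_B(O_B) ⊗ O_A))`,
where `ε_B(O_B)` is the induced system observable of `O_B`. -/
theorem hatA_hatB_expectation
    (ω : S →ₗ[ℂ] ℂ) (σA : PA →ₗ[ℂ] ℂ) (σB : PB →ₗ[ℂ] ℂ)
    (ΘA : (S ⊗[ℂ] PA) ≃ₐ[ℂ] (S ⊗[ℂ] PA)) (ΘB : (S ⊗[ℂ] PB) ≃ₐ[ℂ] (S ⊗[ℂ] PB))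
    (OA : PA) (OB : PB) :
    tensorFunctional (tensorFunctional ω σA) σB
      ((hatA ΘA) ((hatB ΘB) (((1 : S) ⊗ₜ[ℂ] OA) ⊗ₜ[ℂ] OB)))
    = tensorFunctional ω σA (ΘA (inducedObservable σB ΘB OB ⊗ₜ[ℂ] OA)) := by
  rw [hatB_tmul, tensorFunctional_hatA, tensorFunctional_probeSwap_symm_tmul]
  rfl

end
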